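/- The set of integer points (x,y,z) ∈ ℤ³ satisfying 2x² + 2y² + 2z² + xy + 2xz + 2yz − 3x − 4y − 4z + 2 ≤ 0 is exactly {(0,1,0), (1,1,0), (0,0,1), (0,1,1)}, and the left-hand side vanishes at each of these four points. (These four points are the vertices of the tetrahedron T⁴_{(0,0,0)}.) -/

import Mathlib

/-!
Completing the square about the centre `(1/3, 2/3, 1/2)` of the ellipsoid shows that every
real point of `Q₄` has each coordinate in the open interval `(-1, 2)`, so its integer points lie in
the cube `{0, 1}³`; checking the eight corners leaves exactly the four vertices of the tetrahedron,
all on the boundary quadric.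
-/

def quadricQ4 {R : Type*} [CommRing R] (x y z : R) : R :=
  2 * x ^ 2 + 2 * y ^ 2 + 2 * z ^ 2 + x * y + 2 * x * z + 2 * y * z - 3 * x - 4 * y - 4 * z + 2

section OrderedRing

variable {R : Type*} [CommRing R] [LinearOrder R] [IsStrictOrderedRing R] {x y z : R}

theorem mul_sub_one_lt_two_of_quadricQ4_nonpos (h : quadricQ4 x y z ≤ 0) :
    x * (x - 1) < 2 ∧ y * (y - 1) < 2 ∧ z * (z - 1) < 2 := by
  -- each identity completes the square in two coordinates, leaving a single square in the third
  have hx : 36 * quadricQ4 x y z = (3 * x + 6 * y + 6 * z - 8) ^ 2 + (6 * y - 4) ^ 2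
      + (3 * x + 6 * z - 4) ^ 2 + 6 * (3 * x - 1) ^ 2 - 30 := by
    unfold quadricQ4; ring
  have hy : 36 * quadricQ4 x y z = (6 * x + 3 * y + 6 * z - 7) ^ 2 + (6 * x - 2) ^ 2
      + (3 * y + 6 * z - 5) ^ 2 + 6 * (3 * y - 2) ^ 2 - 30 := by
    unfold quadricQ4; ring
  have hz : 60 * quadricQ4 x y z = 3 * (5 * x + 5 * y + 4 * z - 7) ^ 2
      + 5 * (3 * x - 3 * y + 1) ^ 2 + 18 * (2 * z - 1) ^ 2 - 50 := by
    unfold quadricQ4; ring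
  refine ⟨?_, ?_, ?_⟩
  · nlinarith [sq_nonneg (3 * x + 6 * y + 6 * z - 8), sq_nonneg (6 * y - 4),
      sq_nonneg (3 * x + 6 * z - 4)]
  · nlinarith [sq_nonneg (6 * x + 3 * y + 6 * z - 7), sq_nonneg (6 * x - 2),
      sq_nonneg (3 * y + 6 * z - 5)]
  · nlinarith [sq_nonneg (5 * x + 5 * y + 4 * z - 7), sq_nonneg (3 * x - 3 * y + 1)]

end OrderedRing

theorem Int.mem_Icc_zero_one_of_mul_sub_one_lt_two {n : ℤ} (h : n * (n - 1) < 2) :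
    n ∈ Set.Icc 0 1 :=
  ⟨by nlinarith, by nlinarith⟩

theorem quadricQ4_eq_zero_of_mem {x y z : ℤ}
    (hv : (x, y, z) ∈ ({(0,1,0), (1,1,0), (0,0,1), (0,1,1)} : Set (ℤ × ℤ × ℤ))) :
    quadricQ4 x y z = 0 := by
  simp only [Set.mem_insert_iff, Set.mem_singleton_iff, Prod.mk.injEq] at hv
  rcases hv with ⟨rfl, rfl, rfl⟩ | ⟨rfl, rfl, rfl⟩ | ⟨rfl, rfl, rfl⟩ | ⟨rfl, rfl, rfl⟩ <;>
    rfl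

theorem quadricQ4_nonpos_iff {x y z : ℤ} :
    quadricQ4 x y z ≤ 0 ↔
      (x, y, z) ∈ ({(0,1,0), (1,1,0), (0,0,1), (0,1,1)} : Set (ℤ × ℤ × ℤ)) := by
  refine ⟨fun h => ?_, fun hv => (quadricQ4_eq_zero_of_mem hv).le⟩
  obtain ⟨hx, hy, hz⟩ := mul_sub_one_lt_two_of_quadricQ4_nonpos h
  obtain ⟨hx₀, hx₁⟩ := Int.mem_Icc_zero_one_of_mul_sub_one_lt_two hx
  obtain ⟨hy₀, hy₁⟩ := Int.mem_Icc_zero_one_of_mul_sub_one_lt_two hy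
  obtain ⟨hz₀, hz₁⟩ := Int.mem_Icc_zero_one_of_mul_sub_one_lt_two hz
  interval_cases x <;> interval_cases y <;> interval_cases z <;>
    revert h <;> norm_num [quadricQ4]

theorem lattice_points_of_ellipsoid_Q4 :
    {v : ℤ × ℤ × ℤ | 2 * v.1 ^ 2 + 2 * v.2.1 ^ 2 + 2 * v.2.2 ^ 2 + v.1 * v.2.1 + 2 * v.1 * v.2.2 + 2 * v.2.1 * v.2.2 - 3 * v.1 - 4 * v.2.1 - 4 * v.2.2 + 2 ≤ 0} =
      ({(0,1,0), (1,1,0), (0,0,1), (0,1,1)} : Set (ℤ × ℤ × ℤ)) ∧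
    ∀ v ∈ ({(0,1,0), (1,1,0), (0,0,1), (0,1,1)} : Set (ℤ × ℤ × ℤ)),
      2 * v.1 ^ 2 + 2 * v.2.1 ^ 2 + 2 * v.2.2 ^ 2 + v.1 * v.2.1 + 2 * v.1 * v.2.2 + 2 * v.2.1 * v.2.2 - 3 * v.1 - 4 * v.2.1 - 4 * v.2.2 + 2 = 0 :=
  ⟨Set.ext fun _ => quadricQ4_nonpos_iff, fun _ hv => quadricQ4_eq_zero_of_mem hv⟩
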